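/- arXiv:1707.07587 — 4 statements merged into one kernel-verified Lean document; each statement's English description precedes it below -/
import Mathlib

section
/- Let G be a finite group, p a prime, and S a subgroup of G whose index [G:S] is not divisible by p. Then for every k, the restriction map H^k(G; ℤ) → H^k(S; ℤ) induced by the inclusion S ↪ G is injective on the p-primary part: if x ∈ H^k(G; ℤ) has order a power of p and restricts to 0 in H^k(S; ℤ), then x = 0. -/
open CategoryTheory

/-- Restriction of an inhomogeneous `n`-cochain of `G` to a subgroup `S`. -/
noncomputable def resCochain (G : Type) [Group G] (S : Subgroup G) (n : ℕ) :
    ((Fin n → G) → ℤ) →ₗ[ℤ] ((Fin n → S) → ℤ) where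
  toFun φ g := φ (fun i => (g i : G))
  map_add' _ _ := rfl
  map_smul' _ _ := rfl

theorem coe_contractNth {G : Type} [Group G] {S : Subgroup G} {n : ℕ} (j : Fin (n + 1))
    (g : Fin (n + 1) → S) (i : Fin n) :
    ((Fin.contractNth j (· * ·) g i : S) : G) =
      Fin.contractNth j (· * ·) (fun k => (g k : G)) i := by
  unfold Fin.contractNth
  split_ifs <;> simp

/-- The restriction chain map on inhomogeneous cochain complexes. -/
noncomputable def resCochainMap (G : Type) [Group G] (S : Subgroup G) :
    groupCohomology.inhomogeneousCochains (Rep.trivial ℤ G ℤ) ⟶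
      groupCohomology.inhomogeneousCochains (Rep.trivial ℤ S ℤ) where
  f n := ModuleCat.ofHom (resCochain G S n)
  comm' i j hij := by
    obtain rfl : j = i + 1 := hij.symm
    refine ModuleCat.hom_ext (LinearMap.ext fun φ => funext fun g => ?_)
    show (groupCohomology.inhomogeneousCochains (Rep.trivial ℤ ↥S ℤ)).d i (i+1)
        (resCochain G S i φ) g
      = resCochain G S (i+1)
        ((groupCohomology.inhomogeneousCochains (Rep.trivial ℤ G ℤ)).d i (i+1) φ) g
    rw [groupCohomology.inhomogeneousCochains.d_def,
      groupCohomology.inhomogeneousCochains.d_def]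
    simp only [inhomogeneousCochains.d_hom_apply, resCochain, LinearMap.coe_mk, AddHom.coe_mk,
      Rep.trivial_ρ_apply]
    congr 1
    refine Finset.sum_congr rfl fun j _ => ?_
    exact congrArg _ (congrArg φ (funext fun i => coe_contractNth j g i))

/-!
If `res x = 0` then `[G : S] • x = 0` (restriction followed by corestriction is multiplication by
the index), and an element of `p`-power order killed by an integer prime to `p` vanishes.

The transfer is carried out on homogeneous cochains. Let `F` be a homogeneous cocycle of `G` whose
restriction to `S` is `d Z`. Choose a right transversal, so that `g = Q(g) t` with `Q : G → S`
left `S`-equivariant. The prism homotopy `h` between the identity and `Q^*` gives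
`F = d (h F) + Q^* F = d (h F + Q^* Z)`, a coboundary of an `S`-invariant cochain. Summing the
translates of that cochain over `G ⧸ S` gives a `G`-invariant cochain whose coboundary is
`[G : S] • F`.
-/

open Finset

theorem eq_zero_of_addOrderOf_eq_pow_of_nsmul_eq_zero {A : Type*} [AddMonoid A] {x : A}
    {p m N : ℕ} (hx : addOrderOf x = p ^ m) (hN : N • x = 0) (hp : ¬p ∣ N) : x = 0 := by
  rcases m with _ | m
  · rwa [pow_zero, AddMonoid.addOrderOf_eq_one_iff] at hx
  · exact absurd ((dvd_pow_self p m.succ_ne_zero).trans (hx ▸ addOrderOf_dvd_of_nsmul_eq_zero hN))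
      hp

namespace HomologicalComplex

variable {R : Type*} [Ring R] {ι : Type*} {c : ComplexShape ι}

theorem homologyπ_eq_zero_iff (K : HomologicalComplex (ModuleCat R) c) {i j : ι}
    (hij : c.prev j = i) (z : K.cycles j) :
    K.homologyπ j z = 0 ↔ ∃ w, K.toCycles i j w = z :=
  (SetLike.ext_iff.1 ((ShortComplex.moduleCat_exact_iff_range_eq_ker
    (ShortComplex.mk _ _ (K.toCycles_comp_homologyπ i j))).1
    (ShortComplex.exact_of_g_is_cokernel _ (K.homologyIsCokernel i j hij))) z).symm

theorem smul_eq_zero_of_homologyMap_eq_zero {K L : HomologicalComplex (ModuleCat R) c}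
    (Ψ : K ⟶ L) {i j : ι} (hij : c.prev j = i) (r : R)
    (h : ∀ z : K.X j, K.d j (c.next j) z = 0 → (∃ w, L.d i j w = Ψ.f j z) →
      ∃ w, K.d i j w = r • z)
    {x : K.homology j} (hx : homologyMap Ψ j x = 0) : r • x = 0 := by
  obtain ⟨z, rfl⟩ := (ModuleCat.epi_iff_surjective (K.homologyπ j)).1 inferInstance x
  rw [← ConcreteCategory.comp_apply, homologyπ_naturality, ConcreteCategory.comp_apply,
    homologyπ_eq_zero_iff L hij] at hx
  obtain ⟨w, hw⟩ := hx
  have hz : K.d j (c.next j) (K.iCycles j z) = 0 := by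
    rw [← ConcreteCategory.comp_apply, iCycles_d]; rfl
  have hΨz : L.d i j w = Ψ.f j (K.iCycles j z) := by
    simpa only [← ConcreteCategory.comp_apply, toCycles_i, cyclesMap_i] using congr(L.iCycles j $hw)
  obtain ⟨w', hw'⟩ := h (K.iCycles j z) hz ⟨w, hΨz⟩
  rw [← map_smul, homologyπ_eq_zero_iff K hij]
  refine ⟨w', (ModuleCat.mono_iff_injective (K.iCycles j)).1 inferInstance ?_⟩
  rwa [← ConcreteCategory.comp_apply, toCycles_i, map_smul]

end HomologicalComplex

theorem Finset.sum_range_sum_range_eq_sum_diag_sub {M : Type*} [AddCommGroup M] (n : ℕ)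
    (s t : ℕ → ℕ → M) (hlow : ∀ i j, j ≤ i → s (i + 1) j = -t i j)
    (hup : ∀ i j, i < j → s i (j + 1) = -t i j) :
    ∑ i ∈ range (n + 1), ∑ j ∈ range (n + 2), s i j =
      ∑ i ∈ range (n + 1), (s i i + s i (i + 1)) - ∑ i ∈ range n, ∑ j ∈ range (n + 1), t i j := by
  have hrow : ∀ i ∈ range (n + 1), ∑ j ∈ range (n + 2), s i j =
      (∑ j ∈ range i, s i j + (s i i + s i (i + 1))) - ∑ j ∈ Ico (i + 1) (n + 1), t i j := by
    intro i hi
    rw [mem_range] at hi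
    rw [← sum_range_add_sum_Ico _ (by omega : i + 2 ≤ n + 2), sum_range_succ, sum_range_succ,
      ← sum_Ico_add' (s i) (i + 1) (n + 1) 1, sub_eq_add_neg, ← sum_neg_distrib,
      sum_congr rfl fun j hj => hup i j (mem_Ico.1 hj).1]
    abel
  have hlower : ∑ i ∈ range (n + 1), ∑ j ∈ range i, s i j =
      -∑ i ∈ range n, ∑ j ∈ range (i + 1), t i j := by
    rw [sum_range_succ', range_zero, sum_empty, add_zero, ← sum_neg_distrib]
    refine sum_congr rfl fun i _ => ?_
    rw [← sum_neg_distrib]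
    exact sum_congr rfl fun j hj => hlow i j (Nat.lt_succ_iff.1 (mem_range.1 hj))
  have hupper : ∑ i ∈ range (n + 1), ∑ j ∈ Ico (i + 1) (n + 1), t i j =
      ∑ i ∈ range n, ∑ j ∈ Ico (i + 1) (n + 1), t i j := by
    rw [sum_range_succ, Ico_self, sum_empty, add_zero]
  have hsplit : ∑ i ∈ range n, ∑ j ∈ range (n + 1), t i j =
      ∑ i ∈ range n, ∑ j ∈ range (i + 1), t i j +
        ∑ i ∈ range n, ∑ j ∈ Ico (i + 1) (n + 1), t i j := by
    rw [← sum_add_distrib]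
    exact sum_congr rfl fun i hi =>
      (sum_range_add_sum_Ico _ (Nat.succ_le_succ (mem_range.1 hi).le)).symm
  rw [sum_congr rfl hrow, sum_sub_distrib, sum_add_distrib, hlower, hupper, hsplit]
  abel

namespace HomogeneousCochain

variable {α β : Type*}

/- A homogeneous `n`-cochain is encoded as a function of sequences `x : ℕ → α` depending only on
`x 0, …, x n` (`DependsOnFirst n`); its coboundary is `coboundary (n + 2)`. Sequences avoid
transporting tuples between `Fin` types of different lengths. -/
def removeNth (i : ℕ) (x : ℕ → α) : ℕ → α := fun j => if j < i then x j else x (j + 1)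

def coboundary (r : ℕ) (F : (ℕ → α) → ℤ) (x : ℕ → α) : ℤ :=
  ∑ i ∈ range r, (-1) ^ i * F (removeNth i x)

def DependsOnFirst (n : ℕ) (F : (ℕ → α) → ℤ) : Prop :=
  ∀ x y : ℕ → α, (∀ m ≤ n, x m = y m) → F x = F y

theorem removeNth_comp (f : α → β) (i : ℕ) (x : ℕ → α) :
    removeNth i (f ∘ x) = f ∘ removeNth i x := by
  funext j
  simp only [removeNth, Function.comp_apply]
  split_ifs <;> rfl

theorem coboundary_comp (f : α → β) (r : ℕ) (F : (ℕ → β) → ℤ) (x : ℕ → α) :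
    coboundary r (fun y => F (f ∘ y)) x = coboundary r F (f ∘ x) := by
  simp only [coboundary, removeNth_comp]

theorem coboundary_add (r : ℕ) (F F' : (ℕ → α) → ℤ) (x : ℕ → α) :
    coboundary r (F + F') x = coboundary r F x + coboundary r F' x := by
  simp only [coboundary, Pi.add_apply, mul_add, sum_add_distrib]

theorem DependsOnFirst.add {n : ℕ} {F F' : (ℕ → α) → ℤ} (hF : DependsOnFirst n F)
    (hF' : DependsOnFirst n F') : DependsOnFirst n (F + F') :=
  fun x y hxy => by simp only [Pi.add_apply, hF x y hxy, hF' x y hxy]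

theorem DependsOnFirst.comp {n : ℕ} {F : (ℕ → β) → ℤ} (hF : DependsOnFirst n F) (f : α → β) :
    DependsOnFirst n (fun x => F (f ∘ x)) :=
  fun _ _ hxy => hF _ _ fun m hm => congrArg f (hxy m hm)

theorem DependsOnFirst.coboundary {n : ℕ} {F : (ℕ → α) → ℤ} (hF : DependsOnFirst n F) (r : ℕ) :
    DependsOnFirst (n + 1) (coboundary r F) := by
  intro x y hxy
  refine sum_congr rfl fun i _ => congrArg _ (hF _ _ fun m hm => ?_)
  simp only [removeNth]
  split_ifs <;> exact hxy _ (by omega)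

section Prism

variable (Q : α → α)

def mapFirst (i : ℕ) (x : ℕ → α) : ℕ → α := fun j => if j < i then Q (x j) else x j

/- `prism Q i x = (Q x₀, …, Q xᵢ, xᵢ, xᵢ₊₁, …)`; `prismHomotopy Q` is the classical chain homotopy
between the identity and precomposition with `Q`. -/
def prism (i : ℕ) (x : ℕ → α) : ℕ → α := fun j => if j ≤ i then Q (x j) else x (j - 1)

def prismHomotopy (r : ℕ) (F : (ℕ → α) → ℤ) (x : ℕ → α) : ℤ :=
  ∑ i ∈ range r, (-1) ^ i * F (prism Q i x)

theorem removeNth_prism_succ {i j : ℕ} (h : j ≤ i) (x : ℕ → α) :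
    removeNth j (prism Q (i + 1) x) = prism Q i (removeNth j x) := by
  funext m
  simp only [removeNth, prism]
  split_ifs <;> first | rfl | (congr 1; omega)

theorem removeNth_prism_self (i : ℕ) (x : ℕ → α) : removeNth i (prism Q i x) = mapFirst Q i x := by
  funext m
  simp only [removeNth, prism, mapFirst]
  split_ifs <;> first | rfl | omega

theorem removeNth_succ_prism_self (i : ℕ) (x : ℕ → α) :
    removeNth (i + 1) (prism Q i x) = mapFirst Q (i + 1) x := by
  funext m
  simp only [removeNth, prism, mapFirst]
  split_ifs <;> first | rfl | omega

theorem removeNth_succ_prism {i j : ℕ} (h : i < j) (x : ℕ → α) :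
    removeNth (j + 1) (prism Q i x) = prism Q i (removeNth j x) := by
  funext m
  simp only [removeNth, prism]
  split_ifs <;> first | rfl | (congr 1; omega)

theorem DependsOnFirst.prismHomotopy {n : ℕ} {F : (ℕ → α) → ℤ} (hF : DependsOnFirst (n + 1) F) :
    DependsOnFirst n (prismHomotopy Q (n + 1) F) := by
  intro x y hxy
  refine sum_congr rfl fun i hi => congrArg _ (hF _ _ fun m hm => ?_)
  simp only [prism]
  split_ifs
  · rw [hxy m (by have := mem_range.1 hi; omega)]
  · rw [hxy (m - 1) (by omega)]

theorem coboundary_prismHomotopy {n : ℕ} {F : (ℕ → α) → ℤ} (hF : DependsOnFirst n F)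
    (hcocycle : ∀ y, coboundary (n + 2) F y = 0) (x : ℕ → α) :
    coboundary (n + 1) (prismHomotopy Q n F) x = F x - F (Q ∘ x) := by
  -- Expand `∑ᵢ (-1)ⁱ (d F) (prism Q i x) = 0`: the two faces of each prism that forget one of the
  -- duplicated entries telescope to `F x - F (Q ∘ x)`; the remaining faces give the
  -- coboundary of `prismHomotopy Q n F`.
  have key := sum_range_sum_range_eq_sum_diag_sub n
    (fun i j => (-1) ^ (i + j) * F (removeNth j (prism Q i x)))
    (fun i j => (-1) ^ (i + j) * F (prism Q i (removeNth j x)))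
    (fun i j h => by simp only [removeNth_prism_succ Q h]; ring)
    (fun i j h => by simp only [removeNth_succ_prism Q h]; ring)
  have hzero : ∑ i ∈ range (n + 1), ∑ j ∈ range (n + 2),
      (-1) ^ (i + j) * F (removeNth j (prism Q i x)) = 0 := by
    refine sum_eq_zero fun i _ => ?_
    rw [← mul_zero ((-1) ^ i), ← hcocycle (prism Q i x), coboundary, mul_sum]
    exact sum_congr rfl fun j _ => by ring
  have hdiag : ∑ i ∈ range (n + 1), ((-1) ^ (i + i) * F (removeNth i (prism Q i x)) +
      (-1) ^ (i + (i + 1)) * F (removeNth (i + 1) (prism Q i x))) = F x - F (Q ∘ x) := by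
    have hlast : F (mapFirst Q (n + 1) x) = F (Q ∘ x) :=
      hF _ _ fun m hm => if_pos (Nat.lt_succ_of_le hm)
    have hfirst : mapFirst Q 0 x = x := funext fun m => if_neg (Nat.not_lt_zero m)
    have htelescope := sum_range_sub' (fun i => F (mapFirst Q i x)) (n + 1)
    rw [hfirst, hlast] at htelescope
    rw [← htelescope]
    refine sum_congr rfl fun i _ => ?_
    have hsign : (-1 : ℤ) ^ (i + i) = 1 := by rw [← two_mul, pow_mul]; norm_num
    rw [removeNth_prism_self, removeNth_succ_prism_self, ← add_assoc, pow_succ, hsign]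
    ring
  have hhomotopy : ∑ i ∈ range n, ∑ j ∈ range (n + 1),
      (-1) ^ (i + j) * F (prism Q i (removeNth j x)) =
        coboundary (n + 1) (prismHomotopy Q n F) x := by
    rw [sum_comm]
    simp only [coboundary, prismHomotopy, mul_sum, pow_add]
    exact sum_congr rfl fun j _ => sum_congr rfl fun i _ => by ring
  rw [hzero, hdiag, hhomotopy] at key
  linarith

end Prism

section Group

variable {G : Type*} [Group G]

def IsInvariant (S : Subgroup G) (F : (ℕ → G) → ℤ) : Prop :=
  ∀ s ∈ S, ∀ x : ℕ → G, F (s • x) = F x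

theorem IsInvariant.mono {S S' : Subgroup G} {F : (ℕ → G) → ℤ} (hF : IsInvariant S' F)
    (h : S ≤ S') : IsInvariant S F :=
  fun s hs => hF s (h hs)

theorem IsInvariant.add {S : Subgroup G} {F F' : (ℕ → G) → ℤ} (hF : IsInvariant S F)
    (hF' : IsInvariant S F') : IsInvariant S (F + F') :=
  fun s hs x => by simp only [Pi.add_apply, hF s hs, hF' s hs]

theorem removeNth_smul (s : G) (i : ℕ) (x : ℕ → G) : removeNth i (s • x) = s • removeNth i x :=
  removeNth_comp (s * ·) i x

theorem IsInvariant.coboundary {S : Subgroup G} {F : (ℕ → G) → ℤ} (hF : IsInvariant S F)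
    (r : ℕ) : IsInvariant S (coboundary r F) := by
  intro s hs x
  simp only [HomogeneousCochain.coboundary, removeNth_smul, hF s hs]

theorem IsInvariant.prismHomotopy {S : Subgroup G} {Q : G → G}
    (hQ : ∀ s ∈ S, ∀ g, Q (s * g) = s * Q g) {F : (ℕ → G) → ℤ} (hF : IsInvariant S F) (r : ℕ) :
    IsInvariant S (prismHomotopy Q r F) := by
  intro s hs x
  have hprism : ∀ i, prism Q i (s • x) = s • prism Q i x := fun i => funext fun j => by
    simp only [prism, Pi.smul_apply, smul_eq_mul]
    split_ifs
    · exact hQ s hs (x j)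
    · rfl
  simp only [HomogeneousCochain.prismHomotopy, hprism, hF s hs]

theorem IsInvariant.comp_equivariant {S : Subgroup G} {Q : G → S}
    (hQ : ∀ (s : S) g, Q (s * g) = s * Q g) {Z : (ℕ → S) → ℤ} (hZ : IsInvariant ⊤ Z) :
    IsInvariant S (fun x => Z (Q ∘ x)) := by
  intro s hs x
  have hQx : Q ∘ (s • x) = (⟨s, hs⟩ : S) • (Q ∘ x) := funext fun j => hQ ⟨s, hs⟩ (x j)
  simp only [hQx, hZ _ (Subgroup.mem_top _)]

end Group

section Inhomogeneous

open groupCohomology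

variable {H : Type} [Group H]

theorem inhomogeneousCochains_trivial_d_apply (n : ℕ) (φ : (Fin n → H) → ℤ)
    (g : Fin (n + 1) → H) :
    (inhomogeneousCochains (Rep.trivial ℤ H ℤ)).d n (n + 1) φ g =
      φ (fun i => g i.succ) +
        ∑ j : Fin (n + 1), (-1) ^ ((j : ℕ) + 1) * φ (Fin.contractNth j (· * ·) g) := by
  rw [inhomogeneousCochains.d_def, inhomogeneousCochains.d_hom_apply]
  simp only [smul_eq_mul]
  rfl

def partialProdSeq {n : ℕ} (g : Fin n → H) (j : ℕ) : H :=
  ((List.ofFn g).take j).prod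

theorem partialProdSeq_succ {n : ℕ} (g : Fin n → H) (j : Fin n) :
    partialProdSeq g (j + 1) = partialProdSeq g j * g j :=
  Fin.partialProd_succ g j

theorem partialProdSeq_succ_eq_mul_tail {n : ℕ} (g : Fin (n + 1) → H) (m : ℕ) :
    partialProdSeq g (m + 1) = g 0 * partialProdSeq (Fin.tail g) m := by
  simp only [partialProdSeq, List.ofFn_succ, List.take_succ_cons, List.prod_cons]
  rfl

theorem partialProdSeq_contractNth {n : ℕ} (g : Fin (n + 1) → H) (j : Fin (n + 1)) {m : ℕ}
    (hm : m ≤ n) :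
    partialProdSeq (Fin.contractNth j (· * ·) g) m = removeNth (j + 1) (partialProdSeq g) m := by
  have h := congrFun (Fin.partialProd_contractNth g j) ⟨m, by omega⟩
  simp only [Function.comp_apply, Fin.succAbove, Fin.lt_def, Fin.val_castSucc, Fin.val_succ] at h
  simp only [removeNth]
  split_ifs at h ⊢ <;> exact h

theorem partialProdSeq_inv_mul (x : ℕ → H) {n m : ℕ} (hm : m ≤ n) :
    partialProdSeq (fun i : Fin n => (x i)⁻¹ * x (i + 1)) m = (x 0)⁻¹ * x m := by
  induction m with
  | zero => simp [partialProdSeq]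
  | succ m ih =>
    rw [partialProdSeq_succ _ ⟨m, by omega⟩, ih (by omega)]
    group

def ofInhomogeneous (n : ℕ) (φ : (Fin n → H) → ℤ) (x : ℕ → H) : ℤ :=
  φ fun i => (x i)⁻¹ * x (i + 1)

def toInhomogeneous (n : ℕ) (Z : (ℕ → H) → ℤ) (g : Fin n → H) : ℤ :=
  Z (partialProdSeq g)

theorem toInhomogeneous_ofInhomogeneous (n : ℕ) (φ : (Fin n → H) → ℤ) :
    toInhomogeneous n (ofInhomogeneous n φ) = φ :=
  funext fun g => congrArg φ (funext (Fin.partialProd_right_inv g))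

theorem isInvariant_ofInhomogeneous (n : ℕ) (φ : (Fin n → H) → ℤ) :
    IsInvariant ⊤ (ofInhomogeneous n φ) := by
  intro s _ x
  simp only [ofInhomogeneous, Pi.smul_apply, smul_eq_mul, mul_inv_rev, mul_assoc,
    inv_mul_cancel_left]

theorem dependsOnFirst_ofInhomogeneous (n : ℕ) (φ : (Fin n → H) → ℤ) :
    DependsOnFirst n (ofInhomogeneous n φ) := by
  intro x y hxy
  refine congrArg φ (funext fun i => ?_)
  rw [hxy i (by omega), hxy (i + 1) (by omega)]

theorem inhomogeneousCochains_d_toInhomogeneous {n : ℕ} {Z : (ℕ → H) → ℤ}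
    (hinv : IsInvariant ⊤ Z) (hdep : DependsOnFirst n Z) (g : Fin (n + 1) → H) :
    (inhomogeneousCochains (Rep.trivial ℤ H ℤ)).d n (n + 1) (toInhomogeneous n Z) g =
      coboundary (n + 2) Z (partialProdSeq g) := by
  have hface0 : Z (removeNth 0 (partialProdSeq g)) = toInhomogeneous n Z (Fin.tail g) := by
    have hshift : removeNth 0 (partialProdSeq g) = g 0 • partialProdSeq (Fin.tail g) :=
      funext fun m => partialProdSeq_succ_eq_mul_tail g m
    rw [hshift, hinv _ (Subgroup.mem_top _)]
    rfl
  have hface : ∀ j : Fin (n + 1), toInhomogeneous n Z (Fin.contractNth j (· * ·) g) =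
      Z (removeNth (j + 1) (partialProdSeq g)) :=
    fun j => hdep _ _ fun m hm => partialProdSeq_contractNth g j hm
  rw [inhomogeneousCochains_trivial_d_apply, coboundary, sum_range_succ', pow_zero, one_mul,
    hface0]
  simp only [hface]
  rw [Fin.sum_univ_eq_sum_range
    (fun j => (-1) ^ (j + 1) * Z (removeNth (j + 1) (partialProdSeq g))), add_comm]
  rfl

theorem ofInhomogeneous_d (n : ℕ) (φ : (Fin n → H) → ℤ) (x : ℕ → H) :
    ofInhomogeneous (n + 1) ((inhomogeneousCochains (Rep.trivial ℤ H ℤ)).d n (n + 1) φ) x =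
      coboundary (n + 2) (ofInhomogeneous n φ) x := by
  have hinv := isInvariant_ofInhomogeneous n φ
  have hdep := dependsOnFirst_ofInhomogeneous n φ
  calc ofInhomogeneous (n + 1) ((inhomogeneousCochains (Rep.trivial ℤ H ℤ)).d n (n + 1) φ) x
      = (inhomogeneousCochains (Rep.trivial ℤ H ℤ)).d n (n + 1)
          (toInhomogeneous n (ofInhomogeneous n φ)) fun i => (x i)⁻¹ * x (i + 1) := by
        rw [toInhomogeneous_ofInhomogeneous]; rfl
    _ = coboundary (n + 2) (ofInhomogeneous n φ) ((x 0)⁻¹ • x) := by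
        rw [inhomogeneousCochains_d_toInhomogeneous hinv hdep]
        exact hdep.coboundary _ _ _ fun m hm => partialProdSeq_inv_mul x hm
    _ = coboundary (n + 2) (ofInhomogeneous n φ) x := hinv.coboundary _ _ (Subgroup.mem_top _) x

end Inhomogeneous

section Transfer

variable {G : Type*} [Group G] (S : Subgroup G)

attribute [local instance] Subgroup.fintypeQuotientOfFiniteIndex

/- The elements `q.out⁻¹` represent the right cosets `S \ G`, so the summands of an `S`-invariant
`F` do not depend on the choice of representatives. -/
noncomputable def transfer [S.FiniteIndex] (F : (ℕ → G) → ℤ) (x : ℕ → G) : ℤ :=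
  ∑ q : G ⧸ S, F (q.out⁻¹ • x)

variable {S}

theorem IsInvariant.apply_out_inv_smul {F : (ℕ → G) → ℤ} (hF : IsInvariant S F) (g : G)
    (x : ℕ → G) : F ((g : G ⧸ S).out⁻¹ • x) = F (g⁻¹ • x) := by
  obtain ⟨s, hs⟩ := QuotientGroup.mk_out_eq_mul S g
  rw [hs, mul_inv_rev, mul_smul, hF _ (S.inv_mem s.2)]

theorem IsInvariant.transfer [S.FiniteIndex] {F : (ℕ → G) → ℤ} (hF : IsInvariant S F) :
    IsInvariant ⊤ (transfer S F) := by
  intro c _ x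
  have hterm : ∀ q : G ⧸ S, F (q.out⁻¹ • c • x) = F ((c⁻¹ • q).out⁻¹ • x) := fun q => by
    rw [← MulAction.Quotient.mk_smul_out, hF.apply_out_inv_smul, smul_eq_mul, mul_inv_rev,
      inv_inv, mul_smul]
  simp only [HomogeneousCochain.transfer, hterm]
  exact Fintype.sum_equiv (MulAction.toPerm c⁻¹) _ _ fun _ => rfl

theorem transfer_apply_of_isInvariant_top [S.FiniteIndex] {F : (ℕ → G) → ℤ} (hF : IsInvariant ⊤ F)
    (x : ℕ → G) : transfer S F x = S.index * F x := by
  simp only [transfer, hF _ (Subgroup.mem_top _), sum_const, card_univ, Subgroup.index_eq_card,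
    Nat.card_eq_fintype_card, nsmul_eq_mul]

theorem coboundary_transfer [S.FiniteIndex] (r : ℕ) (F : (ℕ → G) → ℤ) (x : ℕ → G) :
    coboundary r (transfer S F) x = transfer S (coboundary r F) x := by
  simp only [coboundary, transfer, removeNth_smul, mul_sum]
  exact sum_comm

theorem DependsOnFirst.transfer [S.FiniteIndex] {n : ℕ} {F : (ℕ → G) → ℤ}
    (hF : DependsOnFirst n F) : DependsOnFirst n (transfer S F) :=
  fun x y hxy => sum_congr rfl fun q _ => hF _ _ fun m hm => by
    simp only [Pi.smul_apply, hxy m hm]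

end Transfer

section Primitive

variable {G : Type*} [Group G] {S : Subgroup G}

theorem exists_isInvariant_coboundary_eq_of_restrict {n : ℕ} {F : (ℕ → G) → ℤ}
    (hFinv : IsInvariant S F) (hFdep : DependsOnFirst (n + 1) F)
    (hcocycle : ∀ x, coboundary (n + 3) F x = 0) {Z : (ℕ → S) → ℤ} (hZinv : IsInvariant ⊤ Z)
    (hZdep : DependsOnFirst n Z) (hres : ∀ y, F (Subtype.val ∘ y) = coboundary (n + 2) Z y) :
    ∃ W, IsInvariant S W ∧ DependsOnFirst n W ∧ ∀ x, coboundary (n + 2) W x = F x := by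
  obtain ⟨T, hT, -⟩ := Subgroup.exists_isComplement_right S 1
  set Q : G → S := fun g => (hT.equiv g).1
  have hQ : ∀ (s : S) g, Q (s * g) = s * Q g := fun s g => by
    simp only [Q, hT.equiv_mul_left]
  have hQ' : ∀ s ∈ S, ∀ g, (Subtype.val ∘ Q) (s * g) = s * (Subtype.val ∘ Q) g :=
    fun s hs g => congrArg Subtype.val (hQ ⟨s, hs⟩ g)
  refine ⟨prismHomotopy (Subtype.val ∘ Q) (n + 1) F + fun x => Z (Q ∘ x),
    (hFinv.prismHomotopy hQ' _).add (hZinv.comp_equivariant hQ),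
    (hFdep.prismHomotopy _).add (hZdep.comp Q), fun x => ?_⟩
  rw [coboundary_add, coboundary_prismHomotopy _ hFdep hcocycle, coboundary_comp, ← hres]
  exact sub_add_cancel _ _

theorem exists_isInvariant_top_coboundary_eq_index_mul [S.FiniteIndex] {n : ℕ}
    {F : (ℕ → G) → ℤ} (hFinv : IsInvariant ⊤ F) (hFdep : DependsOnFirst (n + 1) F)
    (hcocycle : ∀ x, coboundary (n + 3) F x = 0) {Z : (ℕ → S) → ℤ} (hZinv : IsInvariant ⊤ Z)
    (hZdep : DependsOnFirst n Z) (hres : ∀ y, F (Subtype.val ∘ y) = coboundary (n + 2) Z y) :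
    ∃ W, IsInvariant ⊤ W ∧ DependsOnFirst n W ∧
      ∀ x, coboundary (n + 2) W x = S.index * F x := by
  obtain ⟨W, hWinv, hWdep, hW⟩ := exists_isInvariant_coboundary_eq_of_restrict
    (hFinv.mono le_top) hFdep hcocycle hZinv hZdep hres
  refine ⟨transfer S W, hWinv.transfer, hWdep.transfer, fun x => ?_⟩
  rw [coboundary_transfer, show coboundary (n + 2) W = F from funext hW,
    transfer_apply_of_isInvariant_top hFinv]

end Primitive

end HomogeneousCochain

section ResCochain

open groupCohomology HomogeneousCochain

variable {G : Type} [Group G] (S : Subgroup G) [S.FiniteIndex]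

theorem exists_d_eq_index_smul_of_d_eq_resCochain {n : ℕ} (φ : (Fin (n + 1) → G) → ℤ)
    (hφ : (inhomogeneousCochains (Rep.trivial ℤ G ℤ)).d (n + 1) (n + 2) φ = 0)
    (η : (Fin n → S) → ℤ)
    (hη : (inhomogeneousCochains (Rep.trivial ℤ S ℤ)).d n (n + 1) η = resCochain G S (n + 1) φ) :
    ∃ ζ, (inhomogeneousCochains (Rep.trivial ℤ G ℤ)).d n (n + 1) ζ = (S.index : ℤ) • φ := by
  have hcocycle : ∀ x, coboundary (n + 3) (ofInhomogeneous (n + 1) φ) x = 0 := fun x => by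
    rw [← ofInhomogeneous_d, hφ]
    rfl
  have hres : ∀ y, ofInhomogeneous (n + 1) φ (Subtype.val ∘ y) =
      coboundary (n + 2) (ofInhomogeneous n η) y := fun y => by
    rw [← ofInhomogeneous_d, hη]
    rfl
  obtain ⟨W, hWinv, hWdep, hW⟩ := exists_isInvariant_top_coboundary_eq_index_mul
    (isInvariant_ofInhomogeneous _ φ) (dependsOnFirst_ofInhomogeneous _ φ) hcocycle
    (isInvariant_ofInhomogeneous n η) (dependsOnFirst_ofInhomogeneous n η) hres
  refine ⟨toInhomogeneous n W, funext fun g => ?_⟩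
  rw [inhomogeneousCochains_d_toInhomogeneous hWinv hWdep, hW]
  exact congrArg _ (congrFun (toInhomogeneous_ofInhomogeneous _ φ) g)

theorem exists_d_eq_index_smul_of_resCochainMap {i k : ℕ} (hi : (ComplexShape.up ℕ).prev k = i)
    (z : (inhomogeneousCochains (Rep.trivial ℤ G ℤ)).X k)
    (hz : (inhomogeneousCochains (Rep.trivial ℤ G ℤ)).d k ((ComplexShape.up ℕ).next k) z = 0)
    (hres : ∃ w, (inhomogeneousCochains (Rep.trivial ℤ S ℤ)).d i k w = (resCochainMap G S).f k z) :
    ∃ w, (inhomogeneousCochains (Rep.trivial ℤ G ℤ)).d i k w = (S.index : ℤ) • z := by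
  obtain ⟨w, hw⟩ := hres
  rcases k with _ | n
  · obtain rfl : i = 0 := hi.symm.trans CochainComplex.prev_nat_zero
    have hres0 : resCochain G S 0 z = 0 := by
      rw [HomologicalComplex.shape _ 0 0 (by simp)] at hw
      exact hw.symm
    have hz0 : z = 0 := funext fun g => by
      rw [Subsingleton.elim g fun j => ((j.elim0 : S) : G)]
      exact congrFun hres0 _
    exact ⟨0, by rw [hz0, smul_zero, map_zero]⟩
  · obtain rfl : i = n := hi.symm.trans (CochainComplex.prev_nat_succ n)
    rw [CochainComplex.next] at hz
    exact exists_d_eq_index_smul_of_d_eq_resCochain S z hz w hw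

end ResCochain

theorem res_injective_on_p_primary_general
    (G : Type) [Group G] [Finite G] (p : ℕ) (S : Subgroup G)
    (hS : ¬ p ∣ S.index) (k : ℕ)
    (x : groupCohomology (Rep.trivial ℤ G ℤ) k)
    (hx : ∃ m : ℕ, addOrderOf x = p ^ m)
    (h0 : HomologicalComplex.homologyMap (resCochainMap G S) k x = 0) :
    x = 0 := by
  have hindex : S.index • x = 0 := by
    rw [← natCast_zsmul]
    exact (int_smul_eq_zsmul _ _ _).symm.trans
      (HomologicalComplex.smul_eq_zero_of_homologyMap_eq_zero _ rfl _
        (exists_d_eq_index_smul_of_resCochainMap S rfl) h0)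
  obtain ⟨m, hm⟩ := hx
  exact eq_zero_of_addOrderOf_eq_pow_of_nsmul_eq_zero hm hindex hS

theorem res_injective_on_p_primary
    (G : Type) [Group G] [Finite G] (p : ℕ) (hp : p.Prime) (S : Subgroup G)
    (hS : ¬ p ∣ S.index) (k : ℕ)
    (x : groupCohomology (Rep.trivial ℤ G ℤ) k)
    (hx : ∃ m : ℕ, addOrderOf x = p ^ m)
    (h0 : HomologicalComplex.homologyMap (resCochainMap G S) k x = 0) :
    x = 0 :=
  res_injective_on_p_primary_general G p S hS k x hx h0
end

section
/- Let σ be an index type, let R be the multivariate polynomial ring over 𝔽₂ = ℤ/2 in variables X_i for i ∈ σ, and let D be the unique 𝔽₂-linear derivation of R with D(X_i) = X_i² for all i (the algebraic model of the Steenrod square Sq¹). Then D carries homogeneous polynomials of degree k to homogeneous polynomials of degree k+1, D is injective on homogeneous polynomials of degree 1, and for every k ≥ 2 a homogeneous polynomial f of degree k satisfies D f = 0 if and only if f = D g for some homogeneous polynomial g of degree k−1. In other words, the sequence 0 → Sym¹ → Sym² → Sym³ → ⋯ given by D is exact. -/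
/-!
Since `D(X_i²) = 2 X_i³ = 0`, the Leibniz rule gives `D² = 0` in characteristic two. Exactness
comes from a contracting homotopy `h`: order the variables, and for a monomial `X^a` with least
variable `X_j` put `h(X^a) = X^a / X_j` if the exponent of `X_j` is even and `h(X^a) = 0` if it is
odd. This is the homotopy of the one-variable complex (`D(X^(2m-1)) = X^(2m)`) in the variable
`X_j`, extended over the remaining variables, and `Dh + hD` is the identity on every monomial of
positive degree. As `h` lowers degrees by one, a cycle `f` of degree `k ≥ 1` is the boundary of
`h f`, of degree `k - 1`; for `k = 1`, `h f` is a constant, so `f = D (h f) = 0`.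
-/

open MvPolynomial

namespace Finsupp

variable {σ : Type*}

theorem single_one_le_of_mem_support {a : σ →₀ ℕ} {i : σ} (hi : i ∈ a.support) :
    single i 1 ≤ a :=
  single_le_iff.mpr (Nat.one_le_iff_ne_zero.mpr (mem_support_iff.mp hi))

theorem tsub_single_one_add_single_two {a : σ →₀ ℕ} {i : σ} (hi : a i ≠ 0) :
    a - single i 1 + single i 2 = a + single i 1 := by
  ext x
  rcases eq_or_ne i x with rfl | hx
  · simp only [add_apply, tsub_apply, single_eq_same]
    omega
  · simp [single_eq_of_ne' hx]

theorem support_add_single_of_mem {a : σ →₀ ℕ} {i : σ} (hi : i ∈ a.support) :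
    (a + single i 1).support = a.support := by
  classical
  rw [support_add_eq_union, Finset.union_eq_left]
  exact support_single_subset.trans (Finset.singleton_subset_iff.mpr hi)

theorem support_tsub_single_of_two_le {a : σ →₀ ℕ} {i : σ} (hi : 2 ≤ a i) :
    (a - single i 1).support = a.support := by
  ext x
  simp only [mem_support_iff, tsub_apply]
  rcases eq_or_ne i x with rfl | hx
  · simp only [single_eq_same]
    omega
  · simp [single_eq_of_ne' hx]

end Finsupp

namespace MvPolynomial

open Finsupp

variable {σ R : Type*} [CommSemiring R]

noncomputable def steenrodSqOne : Derivation R (MvPolynomial σ R) (MvPolynomial σ R) :=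
  mkDerivation R fun i => X i ^ 2

theorem steenrodSqOne_X (i : σ) : steenrodSqOne (X i : MvPolynomial σ R) = X i ^ 2 :=
  mkDerivation_X R _ i

theorem eq_steenrodSqOne {D : Derivation R (MvPolynomial σ R) (MvPolynomial σ R)}
    (hD : ∀ i, D (X i) = X i ^ 2) : D = steenrodSqOne :=
  derivation_ext fun i => by rw [hD, steenrodSqOne_X]

theorem steenrodSqOne_monomial (a : σ →₀ ℕ) (r : R) :
    steenrodSqOne (monomial a r) = ∑ i ∈ a.support, monomial (a + single i 1) (r * a i) := by
  rw [steenrodSqOne, mkDerivation_monomial, Finsupp.sum, Finset.smul_sum]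
  refine Finset.sum_congr rfl fun i hi => ?_
  rw [X_pow_eq_monomial, smul_eq_mul, monomial_mul, mul_one, smul_monomial, smul_eq_mul,
    tsub_single_one_add_single_two (Finsupp.mem_support_iff.mp hi)]

theorem IsHomogeneous.steenrodSqOne {f : MvPolynomial σ R} {k : ℕ} (hf : f.IsHomogeneous k) :
    (steenrodSqOne f).IsHomogeneous (k + 1) := by
  induction hf using IsWeightedHomogeneous.induction_on with
  | zero => rw [map_zero]; exact isHomogeneous_zero _ _ _
  | add p q _ _ hp hq => rw [map_add]; exact hp.add hq
  | monomial a r ha =>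
    rw [steenrodSqOne_monomial]
    refine IsHomogeneous.sum _ _ _ fun i _ => isHomogeneous_monomial _ ?_
    rw [map_add, degree_single, degree_eq_weight_one]
    exact congrArg (· + 1) ha

theorem steenrodSqOne_steenrodSqOne [CharP R 2] (f : MvPolynomial σ R) :
    steenrodSqOne (steenrodSqOne f) = 0 := by
  induction f using MvPolynomial.induction_on with
  | C r => rw [derivation_C, map_zero]
  | add p q hp hq => rw [map_add, map_add, hp, hq, add_zero]
  | mul_X p i hp =>
    have hX : steenrodSqOne (X i ^ 2 : MvPolynomial σ R) = 0 := by
      rw [Derivation.leibniz_pow, CharTwo.two_nsmul]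
    simp only [Derivation.leibniz, smul_eq_mul, map_add, steenrodSqOne_X, hX, hp, mul_zero,
      zero_add, mul_comm (steenrodSqOne p)]
    exact CharTwo.add_self_eq_zero _

section Homotopy

variable [LinearOrder σ]

noncomputable def steenrodSqOneHomotopy : MvPolynomial σ R →ₗ[R] MvPolynomial σ R :=
  (basisMonomials σ R).constr R fun a =>
    WithTop.recTopCoe 0 (fun j => if Even (a j) then monomial (a - single j 1) 1 else 0)
      a.support.min

theorem steenrodSqOneHomotopy_monomial_eq_smul (a : σ →₀ ℕ) (r : R) :
    steenrodSqOneHomotopy (monomial a r) = r • WithTop.recTopCoe 0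
      (fun j => if Even (a j) then monomial (a - single j 1) 1 else 0) a.support.min := by
  have hbasis : monomial a (1 : R) = basisMonomials σ R a := by rw [coe_basisMonomials]
  rw [← mul_one r, ← smul_eq_mul, ← smul_monomial, map_smul, hbasis, steenrodSqOneHomotopy,
    Module.Basis.constr_basis, smul_eq_mul, mul_one]

theorem steenrodSqOneHomotopy_monomial {a : σ →₀ ℕ} {j : σ} (hj : a.support.min = j)
    (r : R) :
    steenrodSqOneHomotopy (monomial a r) =
      if Even (a j) then monomial (a - single j 1) r else 0 := by
  rw [steenrodSqOneHomotopy_monomial_eq_smul, hj, WithTop.recTopCoe_coe, smul_ite, smul_monomial,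
    smul_eq_mul, mul_one, smul_zero]

theorem steenrodSqOneHomotopy_C (r : R) :
    steenrodSqOneHomotopy (C r : MvPolynomial σ R) = 0 := by
  rw [C_apply, steenrodSqOneHomotopy_monomial_eq_smul, Finsupp.support_zero, Finset.min_empty,
    WithTop.recTopCoe_top, smul_zero]

theorem IsHomogeneous.steenrodSqOneHomotopy {f : MvPolynomial σ R} {k : ℕ}
    (hf : f.IsHomogeneous k) : (steenrodSqOneHomotopy f).IsHomogeneous (k - 1) := by
  induction hf using IsWeightedHomogeneous.induction_on with
  | zero => rw [map_zero]; exact isHomogeneous_zero _ _ _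
  | add p q _ _ hp hq => rw [map_add]; exact hp.add hq
  | monomial a r ha =>
    rcases eq_or_ne a 0 with rfl | ha0
    · rw [monomial_zero', steenrodSqOneHomotopy_C]
      exact isHomogeneous_zero _ _ _
    obtain ⟨j, hj⟩ := Finset.min_of_nonempty (Finsupp.support_nonempty_iff.mpr ha0)
    rw [steenrodSqOneHomotopy_monomial hj]
    split_ifs
    · refine isHomogeneous_monomial _ ?_
      have hdeg : degree (a - single j 1) + degree (single j 1) = degree a := by
        rw [← map_add,
          tsub_add_cancel_of_le (single_one_le_of_mem_support (Finset.mem_of_min hj))]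
      have hak : degree a = k := by rw [degree_eq_weight_one]; exact ha
      rw [degree_single] at hdeg
      omega
    · exact isHomogeneous_zero _ _ _

variable [CharP R 2]

theorem steenrodSqOneHomotopy_steenrodSqOne_monomial {a : σ →₀ ℕ} {j : σ}
    (hj : a.support.min = j) :
    steenrodSqOneHomotopy (steenrodSqOne (monomial a (1 : R))) =
      if Even (a j) then
        ∑ i ∈ a.support.erase j, monomial (a - single j 1 + single i 1) (a i : R)
      else monomial a 1 := by
  have hjS : j ∈ a.support := Finset.mem_of_min hj
  have hmin : ∀ i ∈ a.support, (a + single i 1).support.min = (j : WithTop σ) := fun i hi => by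
    rw [support_add_single_of_mem hi, hj]
  have hrest : ∀ i ∈ a.support.erase j,
      steenrodSqOneHomotopy (monomial (a + single i 1) (1 * (a i : R))) =
        if Even (a j) then monomial (a - single j 1 + single i 1) (a i : R) else 0 := by
    intro i hi
    obtain ⟨hij, hiS⟩ := Finset.mem_erase.mp hi
    rw [steenrodSqOneHomotopy_monomial (hmin i hiS), Finsupp.add_apply, single_eq_of_ne' hij,
      add_zero, one_mul, tsub_add_eq_add_tsub (single_one_le_of_mem_support hjS)]
  rw [steenrodSqOne_monomial, map_sum, ← Finset.add_sum_erase _ _ hjS,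
    Finset.sum_congr rfl hrest, steenrodSqOneHomotopy_monomial (hmin j hjS),
    add_tsub_cancel_right, Finsupp.add_apply, single_eq_same, one_mul]
  by_cases he : Even (a j)
  · simp only [Nat.even_add_one, he, not_true_eq_false, if_false, if_true, zero_add]
  · simp only [Nat.even_add_one, he, not_false_eq_true, if_false, if_true,
      Finset.sum_const_zero, add_zero, CharTwo.natCast_eq_ite]

theorem steenrodSqOne_steenrodSqOneHomotopy_monomial {a : σ →₀ ℕ} {j : σ}
    (hj : a.support.min = j) :
    steenrodSqOne (steenrodSqOneHomotopy (monomial a (1 : R))) =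
      if Even (a j) then
        monomial a 1 + ∑ i ∈ a.support.erase j, monomial (a - single j 1 + single i 1) (a i : R)
      else 0 := by
  rw [steenrodSqOneHomotopy_monomial hj]
  split_ifs with he
  · have hjS : j ∈ a.support := Finset.mem_of_min hj
    have h2 : 2 ≤ a j := by
      obtain ⟨m, hm⟩ := he
      have := Finsupp.mem_support_iff.mp hjS
      omega
    rw [steenrodSqOne_monomial, support_tsub_single_of_two_le h2, ← Finset.add_sum_erase _ _ hjS]
    congr 1
    · rw [tsub_add_cancel_of_le (single_one_le_of_mem_support hjS), tsub_apply, single_eq_same,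
        one_mul, CharTwo.natCast_eq_ite, if_neg (by rw [Nat.even_sub (by omega)]; simp [he])]
    · refine Finset.sum_congr rfl fun i hi => ?_
      rw [tsub_apply, single_eq_of_ne' (Finset.ne_of_mem_erase hi).symm, tsub_zero, one_mul]
  · rw [map_zero]

theorem steenrodSqOne_homotopy_monomial {a : σ →₀ ℕ} {j : σ} (hj : a.support.min = j) :
    steenrodSqOne (steenrodSqOneHomotopy (monomial a (1 : R))) +
      steenrodSqOneHomotopy (steenrodSqOne (monomial a (1 : R))) = monomial a 1 := by
  rw [steenrodSqOne_steenrodSqOneHomotopy_monomial hj,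
    steenrodSqOneHomotopy_steenrodSqOne_monomial hj]
  split_ifs
  · exact CharTwo.add_cancel_right _ _
  · exact zero_add _

theorem steenrodSqOne_homotopy (f : MvPolynomial σ R) :
    steenrodSqOne (steenrodSqOneHomotopy f) + steenrodSqOneHomotopy (steenrodSqOne f) +
      C (constantCoeff f) = f := by
  induction f using MvPolynomial.induction_on' with
  | monomial a r =>
    rcases eq_or_ne a 0 with rfl | ha
    · rw [monomial_zero', steenrodSqOneHomotopy_C, derivation_C, map_zero, map_zero,
        constantCoeff_C, zero_add, zero_add]
    obtain ⟨j, hj⟩ := Finset.min_of_nonempty (Finsupp.support_nonempty_iff.mpr ha)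
    rw [constantCoeff_monomial, if_neg ha, C_0, add_zero, ← mul_one r, ← smul_eq_mul,
      ← smul_monomial, map_smul, Derivation.map_smul, Derivation.map_smul, map_smul, ← smul_add,
      steenrodSqOne_homotopy_monomial hj]
  | add p q hp hq =>
    conv_rhs => rw [← hp, ← hq]
    simp only [map_add]
    abel

end Homotopy

theorem steenrodSqOne_eq_zero_iff [CharP R 2] {k : ℕ} (hk : 1 ≤ k) {f : MvPolynomial σ R}
    (hf : f.IsHomogeneous k) :
    steenrodSqOne f = 0 ↔
      ∃ g : MvPolynomial σ R, g.IsHomogeneous (k - 1) ∧ f = steenrodSqOne g := by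
  let : LinearOrder σ := IsWellOrder.linearOrder WellOrderingRel
  refine ⟨fun hf0 => ⟨steenrodSqOneHomotopy f, hf.steenrodSqOneHomotopy, ?_⟩, ?_⟩
  · have hc : constantCoeff f = 0 := by
      rw [constantCoeff_eq]
      exact hf.coeff_eq_zero (by rw [map_zero]; omega)
    simpa only [hf0, hc, map_zero, add_zero] using (steenrodSqOne_homotopy f).symm
  · rintro ⟨g, -, rfl⟩
    exact steenrodSqOne_steenrodSqOne g

theorem eq_zero_of_steenrodSqOne_eq_zero [CharP R 2] {f : MvPolynomial σ R}
    (hf : f.IsHomogeneous 1) (h : steenrodSqOne f = 0) : f = 0 := by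
  obtain ⟨g, hg, rfl⟩ := (steenrodSqOne_eq_zero_iff le_rfl hf).mp h
  rw [totalDegree_eq_zero_iff_eq_C.mp ((totalDegree_zero_iff_isHomogeneous σ).mpr hg),
    derivation_C]

end MvPolynomial

/-- On the polynomial ring `𝔽₂[X_i : i ∈ σ]` there is a unique `𝔽₂`-linear derivation `D` with
`D(X_i) = X_i²` (an algebraic model of the Steenrod square `Sq¹`).  Any such `D` raises
homogeneous degree by one, is injective on homogeneous polynomials of degree 1, and for every
`k ≥ 2` the homogeneous polynomials of degree `k` killed by `D` are exactly the images under
`D` of homogeneous polynomials of degree `k - 1`; i.e. the sequence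
`0 → Sym¹ → Sym² → Sym³ → ⋯` given by `D` is exact. -/
theorem steenrod_square_one_exact (σ : Type) :
    (∃! D : Derivation (ZMod 2) (MvPolynomial σ (ZMod 2)) (MvPolynomial σ (ZMod 2)),
      ∀ i : σ, D (X i) = X i ^ 2) ∧
    ∀ D : Derivation (ZMod 2) (MvPolynomial σ (ZMod 2)) (MvPolynomial σ (ZMod 2)),
      (∀ i : σ, D (X i) = X i ^ 2) →
      (∀ (k : ℕ) (f : MvPolynomial σ (ZMod 2)),
          f.IsHomogeneous k → (D f).IsHomogeneous (k + 1)) ∧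
      (∀ f : MvPolynomial σ (ZMod 2), f.IsHomogeneous 1 → D f = 0 → f = 0) ∧
      (∀ k : ℕ, 2 ≤ k → ∀ f : MvPolynomial σ (ZMod 2), f.IsHomogeneous k →
          (D f = 0 ↔ ∃ g : MvPolynomial σ (ZMod 2), g.IsHomogeneous (k - 1) ∧ f = D g)) := by
  refine ⟨⟨steenrodSqOne, steenrodSqOne_X, fun D hD => eq_steenrodSqOne hD⟩, fun D hD => ?_⟩
  obtain rfl := eq_steenrodSqOne hD
  exact ⟨fun k f hf => hf.steenrodSqOne, fun f hf => eq_zero_of_steenrodSqOne_eq_zero hf,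
    fun k hk f hf => steenrodSqOne_eq_zero_iff (by omega) hf⟩
end

section
/- Let K be a field of characteristic 2, let V be a finite-dimensional K-vector space, and let k ≥ 0. Then there is a well-defined injective K-linear map from the k-th exterior power ⋀^k V to the k-th tensor power V^{⊗k} sending v₁ ∧ ⋯ ∧ v_k to the sum over all permutations σ of {1,…,k} of v_{σ(1)} ⊗ ⋯ ⊗ v_{σ(k)}. In particular, ⋀^k V is isomorphic to a subspace of V^{⊗k}. -/
/-!
In characteristic 2 every sign is `1`, so the symmetrization map is the antisymmetrization map
`exteriorPower.toTensorPower`. The latter is injective on a free module: for a basis `b`, the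
coordinate of `x ∈ ⋀ⁿ M` at `b_{i₁} ∧ ⋯ ∧ b_{iₙ}` is the determinant pairing of `x` with
`b*_{i₁} ∧ ⋯ ∧ b*_{iₙ}`, and this pairing factors through `toTensorPower`.
-/

open scoped TensorProduct

lemma CharTwo.units_int_smul (R : Type*) {M : Type*} [Ring R] [CharP R 2] [AddCommGroup M]
    [Module R M] (u : ℤˣ) (x : M) : u • x = x := by
  rcases Int.units_eq_one_or u with rfl | rfl
  · exact one_smul _ x
  · rw [Units.neg_smul, one_smul, ← neg_one_smul R x, CharTwo.neg_eq, one_smul]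

namespace exteriorPower

variable {R M : Type*} [CommRing R] [AddCommGroup M] [Module R M]

lemma pairingDual_ιMulti_eq_dualMap_toTensorPower (n : ℕ) (f : Fin n → Module.Dual R M) :
    pairingDual R M n (ιMulti R n f) =
      (toTensorPower R M n).dualMap (TensorPower.multilinearMapToDual R M n f) := by
  rw [pairingDual, alternatingMapLinearEquiv_apply_ιMulti]
  rfl

theorem toTensorPower_injective [Module.Free R M] (n : ℕ) :
    Function.Injective (toTensorPower R M n) := by
  classical
  obtain ⟨I, b⟩ := Module.Free.exists_basis R M
  let : LinearOrder I := linearOrderOfSTO WellOrderingRel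
  refine (injective_iff_map_eq_zero _).2 fun x hx => (b.exteriorPower n).ext_elem fun s => ?_
  rw [basis_repr_apply, ιMultiDual, ιMulti_family, pairingDual_ιMulti_eq_dualMap_toTensorPower,
    LinearMap.dualMap_apply, hx, map_zero, map_zero, Finsupp.zero_apply]

theorem toTensorPower_apply_ιMulti_of_charTwo [CharP R 2] {n : ℕ} (v : Fin n → M) :
    toTensorPower R M n (ιMulti R n v) =
      ∑ σ : Equiv.Perm (Fin n), PiTensorProduct.tprod R (fun i ↦ v (σ i)) := by
  simp only [toTensorPower_apply_ιMulti, CharTwo.units_int_smul R]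

end exteriorPower

theorem exteriorPower_embeds_in_tensorPower_general
    (K V : Type) [Field K] [CharP K 2] [AddCommGroup V] [Module K V] (k : ℕ) :
    ∃ f : (⋀[K]^k V) →ₗ[K] (⨂[K]^k V),
      Function.Injective f ∧
      ∀ v : Fin k → V,
        f ⟨ExteriorAlgebra.ιMulti K k v,
            ExteriorAlgebra.ιMulti_range K k (Set.mem_range_self v)⟩ =
          ∑ σ : Equiv.Perm (Fin k), PiTensorProduct.tprod K (fun i => v (σ i)) :=
  ⟨exteriorPower.toTensorPower K V k, exteriorPower.toTensorPower_injective k,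
    exteriorPower.toTensorPower_apply_ιMulti_of_charTwo⟩

/-- Over a field of characteristic 2, the norm (symmetrization) map gives a well-defined
injective linear map `⋀^k V → V^{⊗k}` sending `v₁ ∧ ⋯ ∧ v_k` to
`∑_{σ ∈ S_k} v_{σ(1)} ⊗ ⋯ ⊗ v_{σ(k)}`. -/
theorem exteriorPower_embeds_in_tensorPower
    (K V : Type) [Field K] [CharP K 2] [AddCommGroup V] [Module K V]
    [FiniteDimensional K V] (k : ℕ) :
    ∃ f : (⋀[K]^k V) →ₗ[K] (⨂[K]^k V),
      Function.Injective f ∧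
      ∀ v : Fin k → V,
        f ⟨ExteriorAlgebra.ιMulti K k v,
            ExteriorAlgebra.ιMulti_range K k (Set.mem_range_self v)⟩ =
          ∑ σ : Equiv.Perm (Fin k), PiTensorProduct.tprod K (fun i => v (σ i)) :=
  exteriorPower_embeds_in_tensorPower_general K V k
end

section
/- There exists a subgroup of the alternating group A_6 isomorphic to the dihedral group D_8 of order 8, and any two subgroups of A_6 isomorphic to D_8 are conjugate in A_6; that is, A_6 has a unique conjugacy class of subgroups isomorphic to D_8. -/
open Equiv

private def A6D8a : alternatingGroup (Fin 6) :=
  ⟨c[0,1,2,3] * c[4,5], by rw [Equiv.Perm.mem_alternatingGroup]; decide⟩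

private def A6D8b : alternatingGroup (Fin 6) :=
  ⟨c[0,2] * c[4,5], by rw [Equiv.Perm.mem_alternatingGroup]; decide⟩

private def A6D8f0 : DihedralGroup 4 → alternatingGroup (Fin 6)
  | .r i => A6D8a ^ i.val
  | .sr i => A6D8b * A6D8a ^ i.val

private def A6D8f : DihedralGroup 4 →* alternatingGroup (Fin 6) where
  toFun := A6D8f0
  map_one' := by decide
  map_mul' := by decide

private lemma A6D8finj : Function.Injective A6D8f := by decide

private lemma fact360 : (360 : ℕ).factorization 2 = 3 := by
  have h : (360 : ℕ) = 2 ^ 3 * 45 := by norm_num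
  rw [h, Nat.factorization_mul (by norm_num) (by norm_num),
    Nat.Prime.factorization_pow Nat.prime_two]
  simp [Nat.factorization_eq_zero_of_not_dvd (show ¬ (2 ∣ 45) by norm_num)]

private lemma cardA6 : Nat.card (alternatingGroup (Fin 6)) = 360 := by
  have := two_mul_card_alternatingGroup (α := Fin 6)
  rw [Fintype.card_perm] at this
  rw [Fintype.card_fin] at this
  have h6 : (6 : ℕ).factorial = 720 := by decide
  rw [h6] at this
  rw [Nat.card_eq_fintype_card]
  omega

private lemma card_of_iso (H : Subgroup (alternatingGroup (Fin 6)))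
    (e : H ≃* DihedralGroup 4) :
    Nat.card H = 2 ^ (Nat.card (alternatingGroup (Fin 6))).factorization 2 := by
  rw [Nat.card_congr e.toEquiv, DihedralGroup.nat_card, cardA6, fact360]; norm_num

/-- The alternating group `A₆` contains a subgroup isomorphic to the dihedral group `D₈` of
order 8, and any two such subgroups are conjugate in `A₆`. -/
theorem dihedral_subgroups_of_A6_exist_and_conjugate :
    (∃ H : Subgroup (alternatingGroup (Fin 6)), Nonempty (H ≃* DihedralGroup 4)) ∧
    (∀ H K : Subgroup (alternatingGroup (Fin 6)),
      Nonempty (H ≃* DihedralGroup 4) → Nonempty (K ≃* DihedralGroup 4) →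
      ∃ g : alternatingGroup (Fin 6),
        Subgroup.map (MulAut.conj g).toMonoidHom H = K) := by
  constructor
  · exact ⟨A6D8f.range, ⟨(MonoidHom.ofInjective A6D8finj).symm⟩⟩
  · rintro H K ⟨eH⟩ ⟨eK⟩
    haveI : Fact (Nat.Prime 2) := ⟨Nat.prime_two⟩
    let P : Sylow 2 (alternatingGroup (Fin 6)) := Sylow.ofCard H (card_of_iso H eH)
    let Q : Sylow 2 (alternatingGroup (Fin 6)) := Sylow.ofCard K (card_of_iso K eK)
    obtain ⟨g, hg⟩ := MulAction.exists_smul_eq (alternatingGroup (Fin 6)) P Q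
    refine ⟨g, ?_⟩
    have h1 := congrArg (fun s : Sylow 2 (alternatingGroup (Fin 6)) => (s : Subgroup (alternatingGroup (Fin 6)))) hg
    rw [Sylow.coe_subgroup_smul, Sylow.coe_ofCard, Sylow.coe_ofCard,
      Subgroup.pointwise_smul_def] at h1
    exact h1
end
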